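/- arXiv:2201.04221 — 3 statements merged into one kernel-verified Lean document; each statement's English description precedes it below -/
import Mathlib

section
/- Let Φ be a finite set of linear functionals on ℝⁿ that is positively nontrivial (every nontrivial nonnegative combination is a nonzero functional). Then there exists a vector v ∈ ℝⁿ such that φ(v) > 0 for all φ ∈ Φ. -/
/-!
Gordan's alternative. Map `v` to the vector `(φ v)_φ ∈ ℝ^Φ`. If the image subspace missed the
open positive orthant, Hahn–Banach would separate the two by a functional `g` that is positive on
the orthant and, being bounded on a subspace, vanishes on it. The coefficients `g(eᵢ)` are then
nonnegative and not all zero, and `g` vanishing on the image says exactly that the corresponding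
combination of the functionals is zero.
-/

theorem LinearMap.apply_eq_zero_of_forall_mem_le {K M : Type*} [Field K] [LinearOrder K]
    [IsStrictOrderedRing K] [AddCommGroup M] [Module K M] (f : M →ₗ[K] K) {W : Submodule K M}
    {u : K} (h : ∀ w ∈ W, u ≤ f w) {w : M} (hw : w ∈ W) : f w = 0 := by
  by_contra hne
  have := h (((u - 1) / f w) • w) (W.smul_mem _ hw)
  rw [map_smul, smul_eq_mul, div_mul_cancel₀ _ hne] at this
  linarith

theorem LinearMap.apply_eq_sum_smul_apply_single {R M ι : Type*} [CommSemiring R]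
    [AddCommMonoid M] [Module R M] [Fintype ι] [DecidableEq ι] (f : (ι → R) →ₗ[R] M) (x : ι → R) :
    f x = ∑ i, x i • f (Pi.single i 1) := by
  conv_lhs => rw [← Finset.univ_sum_single x]
  rw [map_sum]
  refine Finset.sum_congr rfl fun i _ => ?_
  rw [← map_smul, ← Pi.single_smul', smul_eq_mul, mul_one]

theorem LinearMap.apply_single_one_nonneg {ι : Type*} [DecidableEq ι]
    (f : (ι → ℝ) →ₗ[ℝ] ℝ) (hf : ∀ x, (∀ i, 0 < x i) → 0 < f x) (i : ι) :
    0 ≤ f (Pi.single i 1) := by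
  by_contra! hneg
  have hone : 0 < f 1 := hf 1 fun _ => one_pos
  -- `t • eᵢ + 1` is strictly positive, but `f` vanishes on it
  set t := -f 1 / f (Pi.single i 1)
  have ht : 0 < t := div_pos_of_neg_of_neg (neg_neg_of_pos hone) hneg
  have hx : ∀ j, 0 < (t • Pi.single i 1 + 1 : ι → ℝ) j := fun j => by
    have : (0 : ℝ) ≤ (Pi.single i 1 : ι → ℝ) j := by rw [Pi.single_apply]; split_ifs <;> norm_num
    simp only [Pi.add_apply, Pi.smul_apply, Pi.one_apply, smul_eq_mul]
    positivity
  have := hf _ hx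
  rw [map_add, map_smul, smul_eq_mul, div_mul_cancel₀ _ hneg.ne] at this
  linarith

theorem Submodule.exists_nonneg_ne_zero_sum_mul_eq_zero {ι : Type*} [Fintype ι]
    (W : Submodule ℝ (ι → ℝ)) (hW : ∀ w ∈ W, ∃ i, w i ≤ 0) :
    ∃ α : ι → ℝ, 0 ≤ α ∧ α ≠ 0 ∧ ∀ w ∈ W, ∑ i, α i * w i = 0 := by
  classical
  have hdisj : Disjoint (Set.univ.pi fun _ => Set.Ioi 0) (W : Set (ι → ℝ)) :=
    Set.disjoint_left.2 fun w hwpos hw => by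
      obtain ⟨i, hi⟩ := hW w hw
      exact hi.not_gt (hwpos i trivial)
  obtain ⟨f, u, hf_pos, hf_W⟩ := geometric_hahn_banach_open
    (convex_pi fun _ _ => convex_Ioi 0) (isOpen_set_pi Set.finite_univ fun _ _ => isOpen_Ioi)
    W.convex hdisj
  have hf_W0 : ∀ w ∈ W, f w = 0 := fun w hw =>
    f.toLinearMap.apply_eq_zero_of_forall_mem_le hf_W hw
  have hu : u ≤ 0 := by simpa using hf_W 0 W.zero_mem
  set g : (ι → ℝ) →ₗ[ℝ] ℝ := -f.toLinearMap
  have hg_pos : ∀ x, (∀ i, 0 < x i) → 0 < g x := fun x hx => by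
    simpa [g] using (hf_pos x fun i _ => hx i).trans_le hu
  refine ⟨fun i => g (Pi.single i 1), g.apply_single_one_nonneg hg_pos, fun hzero => ?_,
    fun w hw => ?_⟩
  · have hg_one := hg_pos 1 fun _ => one_pos
    rw [g.apply_eq_sum_smul_apply_single] at hg_one
    simp [fun i => congrFun hzero i] at hg_one
  · simpa [g, hf_W0 w hw, mul_comm] using (g.apply_eq_sum_smul_apply_single w).symm

theorem Module.Dual.exists_forall_pos_apply {ι E : Type*} [Fintype ι] [AddCommGroup E]
    [Module ℝ E] (φ : ι → Module.Dual ℝ E)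
    (hφ : ∀ α : ι → ℝ, 0 ≤ α → α ≠ 0 → ∑ i, α i • φ i ≠ 0) :
    ∃ v, ∀ i, 0 < φ i v := by
  by_contra! hneg
  obtain ⟨α, hα_nonneg, hα_ne, hα⟩ :=
    (LinearMap.range (LinearMap.pi φ)).exists_nonneg_ne_zero_sum_mul_eq_zero
      (by rintro _ ⟨v, rfl⟩; exact hneg v)
  exact hφ α hα_nonneg hα_ne (LinearMap.ext fun v => by simpa using hα _ ⟨v, rfl⟩)

/-- If a finite set `Φ` of linear functionals on `ℝⁿ` is positively nontrivial
(every nontrivial nonnegative combination is nonzero), then there is a vector `v`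
with `φ v > 0` for all `φ ∈ Φ`. -/
theorem exists_pos_vector_of_posNontrivial (n : ℕ)
    (Φ : Finset ((Fin n → ℝ) →ₗ[ℝ] ℝ))
    (hpos : ∀ α : ((Fin n → ℝ) →ₗ[ℝ] ℝ) → ℝ,
      (∀ φ ∈ Φ, 0 ≤ α φ) → (∃ φ ∈ Φ, α φ ≠ 0) → ∑ φ ∈ Φ, α φ • φ ≠ 0) :
    ∃ v : Fin n → ℝ, ∀ φ ∈ Φ, 0 < φ v := by
  obtain ⟨v, hv⟩ := Module.Dual.exists_forall_pos_apply (Subtype.val : Φ → _)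
    fun α hα_nonneg hα_ne => by
      set β := Function.extend Subtype.val α 0
      have hβ (φ : Φ) : β φ = α φ := Subtype.val_injective.extend_apply _ _ _
      obtain ⟨φ, hφ⟩ := Function.ne_iff.1 hα_ne
      have := hpos β (fun ψ hψ => hβ ⟨ψ, hψ⟩ ▸ hα_nonneg ⟨ψ, hψ⟩) ⟨φ, φ.2, hβ φ ▸ hφ⟩
      rwa [← Finset.sum_coe_sort, Finset.sum_congr rfl fun φ _ => by rw [hβ φ]] at this
  exact ⟨v, fun φ hφ => hv ⟨φ, hφ⟩⟩
end

section
/- Let U ⊆ ℝⁿ be an open set such that there exists v ∈ ℝⁿ with the properties: (i) if x ∈ U and s > 0 then x + s v ∈ U, and (ii) for every x ∈ ℝⁿ there exists s₀ > 0 with x + s v ∈ U for all s ≥ s₀. Then U is contractible. -/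
/-!
Points of `ℝⁿ` reach `U` after a finite time along the ray direction `v`, and the time can be chosen
locally constant by openness; since `U` is closed under further flow, the admissible times at a
point form a convex set, so a partition of unity glues them into a continuous time `τ ≥ 0`.
Pushing each point `x` to `x + τ x • v` is a map `ℝⁿ → U` whose restriction to `U` is homotopic
to the identity (flow for time `t τ x`); as that restriction factors through the contractible space
`ℝⁿ`, the identity of `U` is nullhomotopic.
-/

open Set

section RayAbsorbing

variable {E : Type*} [AddCommGroup E] [Module ℝ E] {U : Set E} {v : E}

theorem isUpperSet_setOf_add_smul_mem (hinv : ∀ x ∈ U, ∀ s : ℝ, 0 < s → x + s • v ∈ U)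
    (x : E) : IsUpperSet {s : ℝ | x + s • v ∈ U} := by
  intro a b hab ha
  rcases hab.eq_or_lt with rfl | hlt
  · exact ha
  · simpa [add_assoc, ← add_smul] using hinv _ ha (b - a) (sub_pos.2 hlt)

variable [TopologicalSpace E] [ContinuousAdd E]

theorem exists_continuous_nonneg_add_smul_mem [NormalSpace E] [ParacompactSpace E]
    (hU : IsOpen U) (hinv : ∀ x ∈ U, ∀ s : ℝ, 0 < s → x + s • v ∈ U)
    (habs : ∀ x, ∃ s₀ : ℝ, 0 < s₀ ∧ x + s₀ • v ∈ U) :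
    ∃ τ : C(E, ℝ), ∀ x, 0 ≤ τ x ∧ x + τ x • v ∈ U := by
  refine exists_continuous_forall_mem_convex_of_local_const
    (t := fun x => Ici 0 ∩ {s : ℝ | x + s • v ∈ U})
    (fun x => (convex_Ici 0).inter (isUpperSet_setOf_add_smul_mem hinv x).ordConnected.convex)
    fun x => ?_
  obtain ⟨s₀, hs₀, hx⟩ := habs x
  exact ⟨s₀, Filter.eventually_of_mem ((hU.preimage (continuous_add_const _)).mem_nhds hx)
    fun y hy => ⟨hs₀.le, hy⟩⟩

variable [ContinuousSMul ℝ E]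

def rayPush (τ : C(E, ℝ)) (hτU : ∀ x, x + τ x • v ∈ U) : C(E, U) :=
  ⟨fun x => ⟨x + τ x • v, hτU x⟩, by fun_prop⟩

theorem homotopic_id_rayPush_comp_val (hinv : ∀ x ∈ U, ∀ s : ℝ, 0 < s → x + s • v ∈ U)
    (τ : C(E, ℝ)) (hτ₀ : ∀ x, 0 ≤ τ x) (hτU : ∀ x, x + τ x • v ∈ U) :
    (ContinuousMap.id U).Homotopic ((rayPush τ hτU).comp ⟨(↑), continuous_subtype_val⟩) := by
  have flow_mem : ∀ (t : unitInterval) (x : U), (x : E) + ((t : ℝ) * τ x) • v ∈ U := by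
    intro t x
    rcases (mul_nonneg t.2.1 (hτ₀ x)).eq_or_lt with h | h
    · rw [← h, zero_smul, add_zero]
      exact x.2
    · exact hinv _ x.2 _ h
  exact ⟨{ toFun := fun p => ⟨p.2 + ((p.1 : ℝ) * τ p.2) • v, flow_mem p.1 p.2⟩
           continuous_toFun := by fun_prop
           map_zero_left := fun x => by ext1; simp
           map_one_left := fun x => by ext1; simp [rayPush] }⟩

theorem contractibleSpace_of_ray_absorbing [NormalSpace E] [ParacompactSpace E]
    (hU : IsOpen U) (hinv : ∀ x ∈ U, ∀ s : ℝ, 0 < s → x + s • v ∈ U)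
    (habs : ∀ x, ∃ s₀ : ℝ, 0 < s₀ ∧ x + s₀ • v ∈ U) :
    ContractibleSpace U := by
  obtain ⟨τ, hτ⟩ := exists_continuous_nonneg_add_smul_mem hU hinv habs
  obtain ⟨p, hp⟩ := ((id_nullhomotopic E).comp_left ⟨((↑) : U → E), continuous_subtype_val⟩
    |>.comp_right (rayPush τ fun x => (hτ x).2))
  exact (contractible_iff_id_nullhomotopic U).2
    ⟨p, (homotopic_id_rayPush_comp_val hinv τ (fun x => (hτ x).1) _).trans hp⟩

end RayAbsorbing

/-- An open set `U ⊆ ℝⁿ` which is invariant under positive translations by some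
vector `v` and eventually absorbs every point along the direction `v` is
contractible. -/
theorem contractible_of_ray_absorbing (n : ℕ) (U : Set (EuclideanSpace ℝ (Fin n)))
    (hU : IsOpen U) (v : EuclideanSpace ℝ (Fin n))
    (hinv : ∀ x ∈ U, ∀ s : ℝ, 0 < s → x + s • v ∈ U)
    (habs : ∀ x : EuclideanSpace ℝ (Fin n), ∃ s₀ : ℝ, 0 < s₀ ∧
      ∀ s : ℝ, s₀ ≤ s → x + s • v ∈ U) :
    ContractibleSpace U :=
  contractibleSpace_of_ray_absorbing hU hinv fun x =>
    let ⟨s₀, hs₀, hs⟩ := habs x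
    ⟨s₀, hs₀, hs s₀ le_rfl⟩
end

section
/- Let U ⊆ ℝⁿ be a nonempty open convex set. The stabilizer Stab(U) = {v ∈ ℝⁿ : U + v = U} is a linear subspace of ℝⁿ. -/
/-!
Convexity makes the stabilizer of `U` under translation closed under scaling by `c ∈ [0, 1]`:
if `U + v = U` then `u + c • v = (1 - c) • u + c • (u + v) ∈ U`. Being also an additive subgroup,
it is then closed under every real scalar, since `c • v = ⌊c⌋ • v + fract c • v`.
-/

open Pointwise Set

namespace AddSubgroup

variable {E : Type*} [AddCommGroup E] [Module ℝ E]

theorem smul_mem_of_forall_mem_Icc_smul_mem (H : AddSubgroup E)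
    (hH : ∀ c ∈ Icc (0 : ℝ) 1, ∀ v ∈ H, c • v ∈ H) (c : ℝ) {v : E} (hv : v ∈ H) :
    c • v ∈ H := by
  have hfloor : (⌊c⌋ : ℝ) • v ∈ H := by
    rw [Int.cast_smul_eq_zsmul]
    exact H.zsmul_mem hv _
  have hfract : Int.fract c • v ∈ H :=
    hH _ ⟨Int.fract_nonneg c, (Int.fract_lt_one c).le⟩ v hv
  simpa only [← add_smul, Int.floor_add_fract] using H.add_mem hfloor hfract

def toRealSubmodule (H : AddSubgroup E) (hH : ∀ c ∈ Icc (0 : ℝ) 1, ∀ v ∈ H, c • v ∈ H) :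
    Submodule ℝ E where
  toAddSubmonoid := H.toAddSubmonoid
  smul_mem' c _ hv := H.smul_mem_of_forall_mem_Icc_smul_mem hH c hv

end AddSubgroup

namespace Convex

variable {E : Type*} [AddCommGroup E] [Module ℝ E] {s : Set E}

theorem add_smul_mem_of_mem_stabilizer (hs : Convex ℝ s) {v : E}
    (hv : v ∈ AddAction.stabilizer E s) {u : E} (hu : u ∈ s) {c : ℝ} (hc : c ∈ Icc (0 : ℝ) 1) :
    u + c • v ∈ s := by
  have huv : u + v ∈ s := by
    rw [add_comm]
    exact (AddAction.mem_stabilizer_set.mp hv u).mpr hu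
  convert hs hu huv (sub_nonneg.mpr hc.2) hc.1 (sub_add_cancel 1 c) using 1
  module

theorem smul_mem_stabilizer (hs : Convex ℝ s) {v : E} (hv : v ∈ AddAction.stabilizer E s)
    {c : ℝ} (hc : c ∈ Icc (0 : ℝ) 1) : c • v ∈ AddAction.stabilizer E s := by
  refine AddAction.mem_stabilizer_set.mpr fun u => ⟨fun hu => ?_, fun hu => ?_⟩
  · have hneg : -v ∈ AddAction.stabilizer E s := neg_mem hv
    simpa using hs.add_smul_mem_of_mem_stabilizer hneg hu hc
  · rw [vadd_eq_add, add_comm]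
    exact hs.add_smul_mem_of_mem_stabilizer hv hu hc

def stabilizerSubmodule (hs : Convex ℝ s) : Submodule ℝ E :=
  (AddAction.stabilizer E s).toRealSubmodule fun _ hc _ hv => hs.smul_mem_stabilizer hv hc

theorem mem_stabilizerSubmodule (hs : Convex ℝ s) {v : E} :
    v ∈ hs.stabilizerSubmodule ↔ (fun u => u + v) '' s = s := by
  change v +ᵥ s = s ↔ _
  simp_rw [add_comm _ v, ← vadd_eq_add, Set.image_vadd]

end Convex

theorem stabilizer_of_open_convex_is_subspace_general (n : ℕ) (U : Set (Fin n → ℝ))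
    (hconv : Convex ℝ U) :
    ∃ S : Submodule ℝ (Fin n → ℝ),
      (S : Set (Fin n → ℝ)) = {v : Fin n → ℝ | (fun u => u + v) '' U = U} :=
  ⟨hconv.stabilizerSubmodule, Set.ext fun _ => hconv.mem_stabilizerSubmodule⟩

/-- The stabilizer of a nonempty open convex set `U ⊆ ℝⁿ` under the translation
action is a linear subspace of `ℝⁿ`. -/
theorem stabilizer_of_open_convex_is_subspace (n : ℕ) (U : Set (Fin n → ℝ))
    (hne : U.Nonempty) (hop : IsOpen U) (hconv : Convex ℝ U) :
    ∃ S : Submodule ℝ (Fin n → ℝ),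
      (S : Set (Fin n → ℝ)) = {v : Fin n → ℝ | (fun u => u + v) '' U = U} :=
  stabilizer_of_open_convex_is_subspace_general n U hconv
end
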